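/- Let π be in NCL(n). Then the cycled unlinking π° is a partition in NC(n), and π° ≪ π̂. -/

import Mathlib

open scoped Classical

/-- The minimum of a finset of naturals (`0` if empty). -/
noncomputable def fmin (A : Finset ℕ) : ℕ := sInf (A : Set ℕ)

/-- The maximum of a finset of naturals (`0` if empty). -/
noncomputable def fmax (A : Finset ℕ) : ℕ := sSup (A : Set ℕ)

/-- `α` is a partition of the finite set `F ⊆ ℕ`. -/
def IsPartitionOfSet (F : Finset ℕ) (α : Finset (Finset ℕ)) : Prop :=
  (∀ V ∈ α, V.Nonempty) ∧ (∀ V ∈ α, V ⊆ F) ∧ (∀ m ∈ F, ∃ V ∈ α, m ∈ V) ∧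
    ∀ V ∈ α, ∀ W ∈ α, V ≠ W → V ∩ W = ∅

/-- `α` is a partition of `{1,…,n}`. -/
def IsPartitionOf (n : ℕ) (α : Finset (Finset ℕ)) : Prop :=
  IsPartitionOfSet (Finset.Icc 1 n) α

/-- Two distinct blocks of the family `π` cross: there are `a < b < c < d` with
`a, c` in one block and `b, d` in a different block. -/
def IsCrossing (π : Finset (Finset ℕ)) : Prop :=
  ∃ A ∈ π, ∃ B ∈ π, A ≠ B ∧
    ∃ a ∈ A, ∃ b ∈ B, ∃ c ∈ A, ∃ d ∈ B, a < b ∧ b < c ∧ c < d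

/-- `α ∈ NC(n)`: a non-crossing partition of `{1,…,n}`. -/
def IsNCPartition (n : ℕ) (α : Finset (Finset ℕ)) : Prop :=
  IsPartitionOf n α ∧ ¬ IsCrossing α

/-- Reverse refinement order `α ≤ β`: every block of `α` is contained in a block of `β`
(equivalently, every block of `β` is a union of blocks of `α`). -/
def Refines (α β : Finset (Finset ℕ)) : Prop := ∀ V ∈ α, ∃ W ∈ β, V ⊆ W

/-- The partial order `α ≪ β`: `α ≤ β` and for every block `W` of `β` there is a block
`V` of `α` containing both `min W` and `max W`. -/
def LL (α β : Finset (Finset ℕ)) : Prop :=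
  Refines α β ∧ ∀ W ∈ β, ∃ V ∈ α, fmin W ∈ V ∧ fmax W ∈ V

/-- A block `V` (of `α`) is `β`-special: some block `W` of `β` has the same min and max. -/
def SpecialBlock (β : Finset (Finset ℕ)) (V : Finset ℕ) : Prop :=
  ∃ W ∈ β, fmin V = fmin W ∧ fmax V = fmax W

/-- `V` is an outer block of `α`: no block of `α` strictly nests around it. -/
def OuterBlock (α : Finset (Finset ℕ)) (V : Finset ℕ) : Prop :=
  ∀ V' ∈ α, ¬ (fmin V' < fmin V ∧ fmax V < fmax V')

/-- `π` is a linked partition of the finite set `F ⊆ ℕ`. -/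
def IsLinkedPartitionOfSet (F : Finset ℕ) (π : Finset (Finset ℕ)) : Prop :=
  (∀ A ∈ π, A.Nonempty) ∧ (∀ A ∈ π, A ⊆ F) ∧ (∀ m ∈ F, ∃ A ∈ π, m ∈ A) ∧
    ∀ A ∈ π, ∀ B ∈ π, A ≠ B →
      A ∩ B = ∅ ∨
        (2 ≤ A.card ∧ 2 ≤ B.card ∧ (A ∩ B).card = 1 ∧ fmin A ≠ fmin B ∧
          ∀ x ∈ A ∩ B, x = fmin A ∨ x = fmin B)

/-- `π ∈ NCL(F)`: a non-crossing linked partition of the finite set `F`. -/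
def IsNCLOfSet (F : Finset ℕ) (π : Finset (Finset ℕ)) : Prop :=
  IsLinkedPartitionOfSet F π ∧ ¬ IsCrossing π

/-- `π ∈ NCL(n)`: a non-crossing linked partition of `{1,…,n}`. -/
def IsNCL (n : ℕ) (π : Finset (Finset ℕ)) : Prop :=
  IsNCLOfSet (Finset.Icc 1 n) π

/-- The number of blocks of `π` containing `m`. -/
noncomputable def coverCount (π : Finset (Finset ℕ)) (m : ℕ) : ℕ :=
  (π.filter fun A => m ∈ A).card

/-- `m` is singly-covered by `π`: it lies in exactly one block. -/
def SinglyCovered (π : Finset (Finset ℕ)) (m : ℕ) : Prop := coverCount π m = 1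

/-- `m` is doubly-covered by `π`: it lies in exactly two blocks. -/
def DoublyCovered (π : Finset (Finset ℕ)) (m : ℕ) : Prop := coverCount π m = 2

/-- The partition `π̂` generated by the blocks of `π`: its blocks are the connected
components of the ground set under the relation of lying in a common block of `π`. -/
noncomputable def genPart (π : Finset (Finset ℕ)) : Finset (Finset ℕ) :=
  (π.sup id).image fun m =>
    (π.sup id).filter fun x =>
      Relation.EqvGen (fun a b => ∃ A ∈ π, a ∈ A ∧ b ∈ A) m x

/-- The unlinking `π̌` of a linked partition `π`. -/
noncomputable def unlink (π : Finset (Finset ℕ)) : Finset (Finset ℕ) :=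
  π.image fun A => if SinglyCovered π (fmin A) then A else A.erase (fmin A)

/-- The block of `α` containing `m` (empty if there is none). -/
noncomputable def blockOf (α : Finset (Finset ℕ)) (m : ℕ) : Finset ℕ :=
  (α.filter fun V => m ∈ V).sup id

/-- The successor of `m` in the cycle on the block `V` (elements in increasing order). -/
noncomputable def nextInBlock (V : Finset ℕ) (m : ℕ) : ℕ :=
  if m = fmax V then fmin V else fmin (V.filter fun x => m < x)

/-- The predecessor of `m` in the cycle on the block `V`. -/
noncomputable def prevInBlock (V : Finset ℕ) (m : ℕ) : ℕ :=
  if m = fmin V then fmax V else fmax (V.filter fun x => x < m)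

/-- The permutation `P_α` associated to a partition `α`, as a function: each block
`{i₁ < i₂ < ⋯ < iₘ}` becomes the cycle `i₁ ↦ i₂ ↦ ⋯ ↦ iₘ ↦ i₁`. -/
noncomputable def permOf (α : Finset (Finset ℕ)) (m : ℕ) : ℕ :=
  if m ∈ blockOf α m then nextInBlock (blockOf α m) m else m

/-- The inverse permutation `P_α⁻¹`, as a function. -/
noncomputable def permOfInv (α : Finset (Finset ℕ)) (m : ℕ) : ℕ :=
  if m ∈ blockOf α m then prevInBlock (blockOf α m) m else m

/-- The action `τ·α` of a map `τ` on a partition `α = {V₁,…,V_p}`, giving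
`{τ(V₁),…,τ(V_p)}`. -/
def mapPart (τ : ℕ → ℕ) (α : Finset (Finset ℕ)) : Finset (Finset ℕ) :=
  α.image fun V => V.image τ

/-- The cycled unlinking `π° := P_{π̂}⁻¹ · π̌`. -/
noncomputable def cycUnlink (π : Finset (Finset ℕ)) : Finset (Finset ℕ) :=
  mapPart (permOfInv (genPart π)) (unlink π)

/-- `NC(n)` as a finset. -/
noncomputable def NCF (n : ℕ) : Finset (Finset (Finset ℕ)) :=
  ((Finset.Icc 1 n).powerset.powerset).filter (IsNCPartition n)

/-- `NCL(n)` as a finset. -/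
noncomputable def NCLF (n : ℕ) : Finset (Finset (Finset ℕ)) :=
  ((Finset.Icc 1 n).powerset.powerset).filter (IsNCL n)

/-- The restriction `π|_E`: the blocks of `π` contained in `E`. -/
def restrictL (π : Finset (Finset ℕ)) (E : Finset ℕ) : Finset (Finset ℕ) :=
  π.filter fun A => A ⊆ E

/-- The partition `β₀` obtained from `β` by leaving blocks of size `≤ 2` intact and
breaking each block `W` with `|W| ≥ 3` into the doubleton `{min W, max W}` together
with `|W| - 2` singletons. -/
noncomputable def breakBlocks (β : Finset (Finset ℕ)) : Finset (Finset ℕ) :=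
  β.biUnion fun W =>
    if W.card ≤ 2 then {W}
    else insert {fmin W, fmax W} ((W \ {fmin W, fmax W}).image fun x => ({x} : Finset ℕ))

/-!
Classes of `π̂` cannot cross: a chain of blocks joining two points of one class that passes over
a point of the other class must jump over it inside a single block, and non-crossing then traps
the whole other class strictly inside that block's gap; applied to both classes this is absurd.
The unlinking `π̌` is a non-crossing partition refining `π̂`, and `P_{π̂}⁻¹` acts on each block
of `π̂` as the cyclic shift, which turns a crossing of `P_{π̂}⁻¹ · π̌` back into a (cyclically
rotated) crossing of `π̌`. For `≪`, let `m = min W` for a block `W` of `π̂`. Every block of `π`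
through `m` has minimum `m`, so `m` is singly covered and its block `A` survives unlinking.
`P_{π̂}` sends `max W` to `m` and `min W` to the successor of `m` in `W`, which lies in `A`:
otherwise the points of `W` strictly between `m` and the next point of `A` would be closed under
linking.
-/

lemma fmin_mem {A : Finset ℕ} (h : A.Nonempty) : fmin A ∈ A := by
  have := Nat.sInf_mem (s := (A : Set ℕ)) (by exact_mod_cast h)
  exact_mod_cast this

lemma fmin_le {A : Finset ℕ} {a : ℕ} (h : a ∈ A) : fmin A ≤ a :=
  Nat.sInf_le (by exact_mod_cast h)

lemma fmax_mem {A : Finset ℕ} (h : A.Nonempty) : fmax A ∈ A := by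
  have := Nat.sSup_mem (s := (A : Set ℕ)) (by exact_mod_cast h) A.finite_toSet.bddAbove
  exact_mod_cast this

lemma le_fmax {A : Finset ℕ} {a : ℕ} (h : a ∈ A) : a ≤ fmax A :=
  le_csSup A.finite_toSet.bddAbove (by exact_mod_cast h)

section Cycle

variable {V : Finset ℕ} {m y : ℕ}

lemma nextInBlock_fmax : nextInBlock V (fmax V) = fmin V := if_pos rfl

lemma prevInBlock_fmin : prevInBlock V (fmin V) = fmax V := if_pos rfl

lemma nextInBlock_spec (hy : y ∈ V) (hmy : m < y) :
    nextInBlock V m ∈ V ∧ m < nextInBlock V m ∧ nextInBlock V m ≤ y := by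
  have hy' : y ∈ V.filter (m < ·) := Finset.mem_filter.mpr ⟨hy, hmy⟩
  obtain ⟨hmem, hlt⟩ := Finset.mem_filter.mp (fmin_mem ⟨y, hy'⟩)
  rw [nextInBlock, if_neg (hmy.trans_le (le_fmax hy)).ne]
  exact ⟨hmem, hlt, fmin_le hy'⟩

lemma prevInBlock_spec (hy : y ∈ V) (hym : y < m) :
    prevInBlock V m ∈ V ∧ prevInBlock V m < m ∧ y ≤ prevInBlock V m := by
  have hy' : y ∈ V.filter (· < m) := Finset.mem_filter.mpr ⟨hy, hym⟩
  obtain ⟨hmem, hlt⟩ := Finset.mem_filter.mp (fmax_mem ⟨y, hy'⟩)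
  rw [prevInBlock, if_neg ((fmin_le hy).trans_lt hym).ne']
  exact ⟨hmem, hlt, le_fmax hy'⟩

lemma nextInBlock_mem (hm : m ∈ V) : nextInBlock V m ∈ V := by
  rcases (le_fmax hm).eq_or_lt with h | h
  · rw [h, nextInBlock_fmax]
    exact fmin_mem ⟨m, hm⟩
  · exact (nextInBlock_spec (fmax_mem ⟨m, hm⟩) h).1

lemma prevInBlock_mem (hm : m ∈ V) : prevInBlock V m ∈ V := by
  rcases (fmin_le hm).eq_or_lt with h | h
  · rw [← h, prevInBlock_fmin]
    exact fmax_mem ⟨m, hm⟩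
  · exact (prevInBlock_spec (fmin_mem ⟨m, hm⟩) h).1

lemma prevInBlock_nextInBlock (hm : m ∈ V) : prevInBlock V (nextInBlock V m) = m := by
  rcases (le_fmax hm).eq_or_lt with h | h
  · rw [h, nextInBlock_fmax, prevInBlock_fmin]
  · obtain ⟨hn, hmn, -⟩ := nextInBlock_spec (fmax_mem ⟨m, hm⟩) h
    obtain ⟨hp, hpn, hmp⟩ := prevInBlock_spec hm hmn
    by_contra hne
    have := (nextInBlock_spec hp (lt_of_le_of_ne hmp (Ne.symm hne))).2.2
    omega

lemma nextInBlock_prevInBlock (hm : m ∈ V) : nextInBlock V (prevInBlock V m) = m := by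
  rcases (fmin_le hm).eq_or_lt with h | h
  · rw [← h, prevInBlock_fmin, nextInBlock_fmax]
  · obtain ⟨hp, hpm, -⟩ := prevInBlock_spec (fmin_mem ⟨m, hm⟩) h
    obtain ⟨hn, hpn, hnm⟩ := nextInBlock_spec hm hpm
    by_contra hne
    have := (prevInBlock_spec hn (lt_of_le_of_ne hnm hne)).2.2
    omega

/-- The cyclic successor map on a block preserves the cyclic order of four points. -/
lemma nextInBlock_cyclic {a b c d : ℕ} (ha : a ∈ V) (hb : b ∈ V) (hc : c ∈ V) (hd : d ∈ V)
    (hab : a < b) (hbc : b < c) (hcd : c < d) :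
    (nextInBlock V a < nextInBlock V b ∧ nextInBlock V b < nextInBlock V c ∧
        nextInBlock V c < nextInBlock V d) ∨
      (nextInBlock V d < nextInBlock V a ∧ nextInBlock V a < nextInBlock V b ∧
        nextInBlock V b < nextInBlock V c) := by
  obtain ⟨-, ha₁, ha₂⟩ := nextInBlock_spec hb hab
  obtain ⟨-, hb₁, hb₂⟩ := nextInBlock_spec hc hbc
  obtain ⟨-, hc₁, hc₂⟩ := nextInBlock_spec hd hcd
  rcases (le_fmax hd).eq_or_lt with hmax | hlt
  · right
    rw [hmax, nextInBlock_fmax]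
    have := fmin_le ha
    omega
  · left
    have := (nextInBlock_spec (fmax_mem ⟨d, hd⟩) hlt).2.1
    omega

end Cycle

section Partition

variable {F : Finset ℕ} {α β : Finset (Finset ℕ)} {U V W : Finset ℕ} {m : ℕ}

lemma IsPartitionOfSet.eq_of_mem (hα : IsPartitionOfSet F α) (hV : V ∈ α) (hW : W ∈ α)
    (hmV : m ∈ V) (hmW : m ∈ W) : V = W := by
  by_contra hne
  have hm : m ∈ V ∩ W := Finset.mem_inter.mpr ⟨hmV, hmW⟩
  rw [hα.2.2.2 V hV W hW hne] at hm
  exact Finset.notMem_empty m hm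

lemma IsPartitionOfSet.blockOf_eq (hα : IsPartitionOfSet F α) (hV : V ∈ α) (hm : m ∈ V) :
    blockOf α m = V := by
  have hfilter : α.filter (m ∈ ·) = {V} :=
    Finset.eq_singleton_iff_unique_mem.mpr ⟨Finset.mem_filter.mpr ⟨hV, hm⟩,
      fun W hW => hα.eq_of_mem (Finset.mem_filter.mp hW).1 hV (Finset.mem_filter.mp hW).2 hm⟩
  rw [blockOf, hfilter, Finset.sup_singleton, id]

lemma IsPartitionOfSet.permOf_eq (hα : IsPartitionOfSet F α) (hV : V ∈ α) (hm : m ∈ V) :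
    permOf α m = nextInBlock V m := by
  rw [permOf, hα.blockOf_eq hV hm, if_pos hm]

lemma IsPartitionOfSet.permOfInv_eq (hα : IsPartitionOfSet F α) (hV : V ∈ α) (hm : m ∈ V) :
    permOfInv α m = prevInBlock V m := by
  rw [permOfInv, hα.blockOf_eq hV hm, if_pos hm]

lemma IsPartitionOfSet.bijOn_permOfInv (hα : IsPartitionOfSet F α) :
    Set.BijOn (permOfInv α) F F := by
  have hinv : Set.InvOn (permOf α) (permOfInv α) F F := by
    constructor <;> intro m hm <;> obtain ⟨V, hV, hmV⟩ := hα.2.2.1 m hm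
    · rw [hα.permOfInv_eq hV hmV, hα.permOf_eq hV (prevInBlock_mem hmV),
        nextInBlock_prevInBlock hmV]
    · rw [hα.permOf_eq hV hmV, hα.permOfInv_eq hV (nextInBlock_mem hmV),
        prevInBlock_nextInBlock hmV]
  refine hinv.bijOn ?_ ?_ <;> intro m hm <;> obtain ⟨V, hV, hmV⟩ := hα.2.2.1 m hm
  · rw [Finset.mem_coe, hα.permOfInv_eq hV hmV]
    exact hα.2.1 V hV (prevInBlock_mem hmV)
  · rw [Finset.mem_coe, hα.permOf_eq hV hmV]
    exact hα.2.1 V hV (nextInBlock_mem hmV)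

lemma IsPartitionOfSet.mapPart_of_bijOn {τ : ℕ → ℕ} (hβ : IsPartitionOfSet F β)
    (hτ : Set.BijOn τ F F) : IsPartitionOfSet F (mapPart τ β) := by
  simp only [IsPartitionOfSet, mapPart, Finset.forall_mem_image]
  refine ⟨fun V hV => (hβ.1 V hV).image τ, fun V hV x hx => ?_, fun m hm => ?_,
    fun V hV W hW hVW => ?_⟩
  · obtain ⟨y, hy, rfl⟩ := Finset.mem_image.mp hx
    exact hτ.mapsTo (hβ.2.1 V hV hy)
  · obtain ⟨x, hx, rfl⟩ := hτ.surjOn (Finset.mem_coe.mpr hm)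
    obtain ⟨V, hV, hxV⟩ := hβ.2.2.1 x hx
    exact ⟨_, Finset.mem_image_of_mem _ hV, Finset.mem_image_of_mem τ hxV⟩
  · have hinj : Set.InjOn τ (↑V ∪ ↑W) := hτ.injOn.mono
      (Set.union_subset (Finset.coe_subset.mpr (hβ.2.1 V hV)) (Finset.coe_subset.mpr (hβ.2.1 W hW)))
    rw [← Finset.image_inter_of_injOn V W hinj,
      hβ.2.2.2 V hV W hW (fun h => hVW (h ▸ rfl)), Finset.image_empty]

lemma IsPartitionOfSet.mem_and_nextInBlock_mem (hα : IsPartitionOfSet F α) (hV : V ∈ α)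
    (hUV : U ⊆ V) {x : ℕ} (hx : x ∈ U.image (permOfInv α)) :
    x ∈ V ∧ nextInBlock V x ∈ U := by
  obtain ⟨y, hy, rfl⟩ := Finset.mem_image.mp hx
  rw [hα.permOfInv_eq hV (hUV hy), nextInBlock_prevInBlock (hUV hy)]
  exact ⟨prevInBlock_mem (hUV hy), hy⟩

lemma IsPartitionOfSet.mem_image_permOfInv (hα : IsPartitionOfSet F α) (hV : V ∈ α)
    {x : ℕ} (hx : x ∈ V) (hnext : nextInBlock V x ∈ U) : x ∈ U.image (permOfInv α) :=
  Finset.mem_image.mpr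
    ⟨_, hnext, by rw [hα.permOfInv_eq hV (nextInBlock_mem hx), prevInBlock_nextInBlock hx]⟩

lemma IsPartitionOfSet.refines_mapPart_permOfInv (hα : IsPartitionOfSet F α)
    (hβα : Refines β α) : Refines (mapPart (permOfInv α) β) α := by
  intro _ hU'
  obtain ⟨U, hU, rfl⟩ := Finset.mem_image.mp hU'
  obtain ⟨V, hV, hUV⟩ := hβα U hU
  exact ⟨V, hV, fun x hx => (hα.mem_and_nextInBlock_mem hV hUV hx).1⟩

/-- A crossing of `P_α⁻¹ · β` is a crossing either of `α` or, after applying `P_α`, of `β`. -/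
lemma IsPartitionOfSet.not_isCrossing_mapPart_permOfInv (hα : IsPartitionOfSet F α)
    (hαnc : ¬ IsCrossing α) (hβnc : ¬ IsCrossing β) (hβα : Refines β α) :
    ¬ IsCrossing (mapPart (permOfInv α) β) := by
  rintro ⟨_, hPU, _, hPU', hne, a, ha, b, hb, c, hc, d, hd, hab, hbc, hcd⟩
  obtain ⟨U, hU, rfl⟩ := Finset.mem_image.mp hPU
  obtain ⟨U', hU', rfl⟩ := Finset.mem_image.mp hPU'
  replace hne : U ≠ U' := fun h => hne (h ▸ rfl)
  obtain ⟨V, hV, hUV⟩ := hβα U hU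
  obtain ⟨V', hV', hUV'⟩ := hβα U' hU'
  obtain ⟨haV, ha'⟩ := hα.mem_and_nextInBlock_mem hV hUV ha
  obtain ⟨hcV, hc'⟩ := hα.mem_and_nextInBlock_mem hV hUV hc
  obtain ⟨hbV, hb'⟩ := hα.mem_and_nextInBlock_mem hV' hUV' hb
  obtain ⟨hdV, hd'⟩ := hα.mem_and_nextInBlock_mem hV' hUV' hd
  by_cases hVV : V = V'
  · subst hVV
    rcases nextInBlock_cyclic haV hbV hcV hdV hab hbc hcd with ⟨h₁, h₂, h₃⟩ | ⟨h₁, h₂, h₃⟩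
    · exact hβnc ⟨U, hU, U', hU', hne, _, ha', _, hb', _, hc', _, hd', h₁, h₂, h₃⟩
    · exact hβnc ⟨U', hU', U, hU, hne.symm, _, hd', _, ha', _, hb', _, hc', h₁, h₂, h₃⟩
  · exact hαnc ⟨V, hV, V', hV', hVV, a, haV, b, hbV, c, hcV, d, hdV, hab, hbc, hcd⟩

lemma Refines.trans {γ : Finset (Finset ℕ)} (hαβ : Refines α β) (hβγ : Refines β γ) :
    Refines α γ := by
  intro U hU
  obtain ⟨V, hV, hUV⟩ := hαβ U hU
  obtain ⟨W, hW, hVW⟩ := hβγ V hV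
  exact ⟨W, hW, hUV.trans hVW⟩

lemma refines_image {f : Finset ℕ → Finset ℕ} (hf : ∀ A, f A ⊆ A) : Refines (α.image f) α := by
  intro _ hU
  obtain ⟨A, hA, rfl⟩ := Finset.mem_image.mp hU
  exact ⟨A, hA, hf A⟩

lemma not_isCrossing_image {f : Finset ℕ → Finset ℕ} (hf : ∀ A, f A ⊆ A)
    (hα : ¬ IsCrossing α) : ¬ IsCrossing (α.image f) := by
  rintro ⟨_, hU, _, hU', hne, a, ha, b, hb, c, hc, d, hd, h⟩
  obtain ⟨A, hA, rfl⟩ := Finset.mem_image.mp hU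
  obtain ⟨B, hB, rfl⟩ := Finset.mem_image.mp hU'
  exact hα ⟨A, hA, B, hB, fun h => hne (h ▸ rfl), a, hf A ha, b, hf B hb, c, hf A hc, d,
    hf B hd, h⟩

end Partition

section Generated

variable {π : Finset (Finset ℕ)} {A V W : Finset ℕ} {x y : ℕ}

def Linked (π : Finset (Finset ℕ)) (a b : ℕ) : Prop := ∃ A ∈ π, a ∈ A ∧ b ∈ A

lemma mem_iff_of_eqvGen_linked {S : Set ℕ} (hS : ∀ A ∈ π, ∀ x ∈ A, ∀ y ∈ A, x ∈ S → y ∈ S)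
    (h : Relation.EqvGen (Linked π) x y) : x ∈ S ↔ y ∈ S := by
  induction h with
  | rel x y hxy =>
    obtain ⟨A, hA, hx, hy⟩ := hxy
    exact ⟨hS A hA x hx y hy, hS A hA y hy x hx⟩
  | refl => rfl
  | symm _ _ _ ih => exact ih.symm
  | trans _ _ _ _ _ ih₁ ih₂ => exact ih₁.trans ih₂

lemma mem_genPart_iff (hV : V ∈ genPart π) (hx : x ∈ V) :
    y ∈ V ↔ Relation.EqvGen (Linked π) x y := by
  obtain ⟨m, -, rfl⟩ := Finset.mem_image.mp hV
  obtain ⟨hx, hmx⟩ := Finset.mem_filter.mp hx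
  change y ∈ Finset.filter (Relation.EqvGen (Linked π) m) _ ↔ _
  rw [Finset.mem_filter]
  refine ⟨fun ⟨_, hmy⟩ => _root_.trans (symm hmx) hmy, fun hxy => ⟨?_, _root_.trans hmx hxy⟩⟩
  refine (mem_iff_of_eqvGen_linked (S := ↑(π.sup id)) ?_ hxy).mp hx
  exact fun A hA _ _ y hy _ => Finset.mem_sup.mpr ⟨A, hA, hy⟩

lemma subset_of_mem_genPart (hW : W ∈ genPart π) (hxW : x ∈ W) (hA : A ∈ π) (hxA : x ∈ A) :
    A ⊆ W :=
  fun _ hy => (mem_genPart_iff hW hxW).mpr (.rel _ _ ⟨A, hA, hxA, hy⟩)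

lemma isPartitionOfSet_genPart (π : Finset (Finset ℕ)) :
    IsPartitionOfSet (π.sup id) (genPart π) := by
  refine ⟨fun V hV => ?_, fun V hV => ?_, fun m hm => ?_, fun V hV W hW hVW => ?_⟩
  · obtain ⟨m, hm, rfl⟩ := Finset.mem_image.mp hV
    exact ⟨m, Finset.mem_filter.mpr ⟨hm, .refl m⟩⟩
  · obtain ⟨m, -, rfl⟩ := Finset.mem_image.mp hV
    exact Finset.filter_subset _ _
  · exact ⟨_, Finset.mem_image_of_mem _ hm, Finset.mem_filter.mpr ⟨hm, .refl m⟩⟩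
  · by_contra h
    obtain ⟨x, hx⟩ := Finset.nonempty_iff_ne_empty.mpr h
    rw [Finset.mem_inter] at hx
    exact hVW (Finset.ext fun y => (mem_genPart_iff hV hx.1).trans (mem_genPart_iff hW hx.2).symm)

lemma refines_genPart (hπ : ∀ A ∈ π, A.Nonempty) : Refines π (genPart π) := by
  intro A hA
  obtain ⟨a, ha⟩ := hπ A hA
  obtain ⟨W, hW, haW⟩ := (isPartitionOfSet_genPart π).2.2.1 a (Finset.mem_sup.mpr ⟨A, hA, ha⟩)
  exact ⟨W, hW, subset_of_mem_genPart hW haW hA ha⟩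

lemma exists_straddle_of_eqvGen {a b c : ℕ} (h : Relation.EqvGen (Linked π) a c) (hab : a < b)
    (hbc : b < c) (hb : ¬ Relation.EqvGen (Linked π) a b) :
    ∃ A ∈ π, ∃ p ∈ A, ∃ q ∈ A, p < b ∧ b < q ∧ Relation.EqvGen (Linked π) a p := by
  by_contra! hno
  let S : Set ℕ := {z | Relation.EqvGen (Linked π) a z → z < b}
  have hS : ∀ A ∈ π, ∀ x ∈ A, ∀ y ∈ A, x ∈ S → y ∈ S := by
    intro A hA x hx y hy hxb hay
    have hax : Relation.EqvGen (Linked π) a x := _root_.trans hay (.rel _ _ ⟨A, hA, hy, hx⟩)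
    rcases lt_trichotomy y b with hyb | rfl | hby
    · exact hyb
    · exact absurd hay hb
    · exact absurd hax (hno A hA x hx y hy (hxb hax) hby)
  exact hbc.not_gt ((mem_iff_of_eqvGen_linked hS h).mp (fun _ => hab) h)

lemma mem_Ioo_of_eqvGen (hnc : ¬ IsCrossing π) (hA : A ∈ π) {p q z w : ℕ} (hp : p ∈ A)
    (hq : q ∈ A) (hz : z ∈ Set.Ioo p q) (hpz : ¬ Relation.EqvGen (Linked π) p z)
    (h : Relation.EqvGen (Linked π) z w) : w ∈ Set.Ioo p q := by
  let S : Set ℕ := {z | z ∈ Set.Ioo p q ∧ ¬ Relation.EqvGen (Linked π) p z}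
  have hS : ∀ B ∈ π, ∀ x ∈ B, ∀ y ∈ B, x ∈ S → y ∈ S := by
    rintro B hB x hx y hy ⟨⟨hpx, hxq⟩, hpx'⟩
    have hpy : ¬ Relation.EqvGen (Linked π) p y :=
      fun hpy => hpx' (_root_.trans hpy (.rel _ _ ⟨B, hB, hy, hx⟩))
    have hBA : B ≠ A := by
      rintro rfl
      exact hpx' (.rel _ _ ⟨B, hB, hp, hx⟩)
    refine ⟨⟨?_, ?_⟩, hpy⟩
    · rcases lt_trichotomy p y with hlt | rfl | hyp
      · exact hlt
      · exact absurd (.refl p) hpy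
      · exact absurd ⟨B, hB, A, hA, hBA, y, hy, p, hp, x, hx, q, hq, hyp, hpx, hxq⟩ hnc
    · rcases lt_trichotomy y q with hlt | rfl | hqy
      · exact hlt
      · exact absurd (.rel _ _ ⟨A, hA, hp, hq⟩) hpy
      · exact absurd ⟨A, hA, B, hB, hBA.symm, p, hp, x, hx, q, hq, y, hy, hpx, hxq, hqy⟩ hnc
  exact ((mem_iff_of_eqvGen_linked hS h).mp ⟨hz, hpz⟩).1

lemma not_isCrossing_genPart (hnc : ¬ IsCrossing π) : ¬ IsCrossing (genPart π) := by
  rintro ⟨V, hV, W, hW, hVW, a, ha, b, hb, c, hc, d, hd, hab, hbc, hcd⟩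
  have hsep : ∀ x ∈ V, ∀ y ∈ W, ¬ Relation.EqvGen (Linked π) x y := fun x hx y hy h =>
    hVW ((isPartitionOfSet_genPart π).eq_of_mem hV hW ((mem_genPart_iff hV hx).mpr h) hy)
  obtain ⟨A, hA, p, hp, q, hq, hpb, hbq, hap⟩ :=
    exists_straddle_of_eqvGen ((mem_genPart_iff hV ha).mp hc) hab hbc (hsep a ha b hb)
  obtain ⟨A', hA', p', hp', q', hq', hpc, hcq, hbp'⟩ :=
    exists_straddle_of_eqvGen ((mem_genPart_iff hW hb).mp hd) hbc hcd
      (fun h => hsep c hc b hb (symm h))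
  have hpV : p ∈ V := (mem_genPart_iff hV ha).mpr hap
  have hp'W : p' ∈ W := (mem_genPart_iff hW hb).mpr hbp'
  have h₁ := mem_Ioo_of_eqvGen hnc hA hp hq ⟨hpb, hbq⟩ (hsep p hpV b hb) hbp'
  have h₂ := mem_Ioo_of_eqvGen hnc hA' hp' hq' ⟨hpc, hcq⟩ (fun h => hsep c hc p' hp'W (symm h))
    ((mem_genPart_iff hV hc).mp hpV)
  exact lt_asymm h₁.1 h₂.1

end Generated

section Unlinking

variable {F : Finset ℕ} {π : Finset (Finset ℕ)} {A B W : Finset ℕ} {m y : ℕ}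

lemma IsLinkedPartitionOfSet.sup_id_eq (hπ : IsLinkedPartitionOfSet F π) : π.sup id = F :=
  Finset.ext fun m => Finset.mem_sup.trans
    ⟨fun ⟨A, hA, hm⟩ => hπ.2.1 A hA hm, fun hm => hπ.2.2.1 m hm⟩

lemma IsLinkedPartitionOfSet.eq_fmin_of_mem (hπ : IsLinkedPartitionOfSet F π) (hA : A ∈ π)
    (hB : B ∈ π) (hAB : A ≠ B) (hmA : m ∈ A) (hmB : m ∈ B) :
    (m = fmin A ∨ m = fmin B) ∧ fmin A ≠ fmin B ∧ 2 ≤ A.card := by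
  rcases hπ.2.2.2 A hA B hB hAB with h | ⟨hA₂, -, -, hne, hmin⟩
  · exact absurd (h ▸ Finset.mem_inter.mpr ⟨hmA, hmB⟩) (Finset.notMem_empty m)
  · exact ⟨hmin m (Finset.mem_inter.mpr ⟨hmA, hmB⟩), hne, hA₂⟩

lemma eq_of_singlyCovered (hs : SinglyCovered π m) (hA : A ∈ π) (hmA : m ∈ A) (hB : B ∈ π)
    (hmB : m ∈ B) : A = B := by
  by_contra hne
  have : 1 < coverCount π m := Finset.one_lt_card.mpr
    ⟨A, Finset.mem_filter.mpr ⟨hA, hmA⟩, B, Finset.mem_filter.mpr ⟨hB, hmB⟩, hne⟩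
  exact this.ne' hs

lemma singlyCovered_of_forall_eq (hA : A ∈ π) (hmA : m ∈ A) (h : ∀ B ∈ π, m ∈ B → B = A) :
    SinglyCovered π m :=
  Finset.card_eq_one.mpr ⟨A, Finset.eq_singleton_iff_unique_mem.mpr
    ⟨Finset.mem_filter.mpr ⟨hA, hmA⟩, fun B hB => h B (Finset.mem_filter.mp hB).1
      (Finset.mem_filter.mp hB).2⟩⟩

lemma exists_ne_mem_of_not_singlyCovered (hA : A ∈ π) (hmA : m ∈ A)
    (hs : ¬ SinglyCovered π m) : ∃ B ∈ π, B ≠ A ∧ m ∈ B := by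
  have : 1 < coverCount π m :=
    lt_of_le_of_ne (Finset.card_pos.mpr ⟨A, Finset.mem_filter.mpr ⟨hA, hmA⟩⟩) (Ne.symm hs)
  obtain ⟨B, hB, hBA⟩ := Finset.exists_mem_ne this A
  exact ⟨B, (Finset.mem_filter.mp hB).1, hBA, (Finset.mem_filter.mp hB).2⟩

noncomputable def unlinkBlock (π : Finset (Finset ℕ)) (A : Finset ℕ) : Finset ℕ :=
  if SinglyCovered π (fmin A) then A else A.erase (fmin A)

lemma unlink_eq_image : unlink π = π.image (unlinkBlock π) := rfl

lemma unlinkBlock_subset : unlinkBlock π A ⊆ A := by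
  unfold unlinkBlock
  split
  · exact subset_rfl
  · exact Finset.erase_subset _ _

lemma unlinkBlock_of_singlyCovered (hs : SinglyCovered π (fmin A)) : unlinkBlock π A = A :=
  if_pos hs

lemma mem_unlinkBlock_of_ne (hm : m ∈ A) (hne : m ≠ fmin A) : m ∈ unlinkBlock π A := by
  unfold unlinkBlock
  split
  · exact hm
  · exact Finset.mem_erase.mpr ⟨hne, hm⟩

lemma ne_fmin_of_mem_unlinkBlock (hA : A ∈ π) (hB : B ∈ π) (hBA : B ≠ A)
    (hyA : y ∈ unlinkBlock π A) (hyB : y ∈ B) : y ≠ fmin A := by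
  rintro rfl
  have hs : ¬ SinglyCovered π (fmin A) :=
    fun hs => hBA (eq_of_singlyCovered hs hB hyB hA (unlinkBlock_subset hyA))
  rw [unlinkBlock, if_neg hs] at hyA
  exact Finset.notMem_erase _ _ hyA

lemma IsLinkedPartitionOfSet.unlinkBlock_nonempty (hπ : IsLinkedPartitionOfSet F π)
    (hA : A ∈ π) : (unlinkBlock π A).Nonempty := by
  have hmin := fmin_mem (hπ.1 A hA)
  by_cases hs : SinglyCovered π (fmin A)
  · rw [unlinkBlock_of_singlyCovered hs]
    exact hπ.1 A hA
  · obtain ⟨B, hB, hBA, hmB⟩ := exists_ne_mem_of_not_singlyCovered hA hmin hs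
    have hcard := (hπ.eq_fmin_of_mem hA hB hBA.symm hmin hmB).2.2
    rw [unlinkBlock, if_neg hs, ← Finset.card_pos, Finset.card_erase_of_mem hmin]
    omega

lemma IsLinkedPartitionOfSet.exists_mem_unlinkBlock (hπ : IsLinkedPartitionOfSet F π)
    (hA : A ∈ π) (hmA : m ∈ A) : ∃ B ∈ π, m ∈ unlinkBlock π B := by
  by_cases hm : m = fmin A
  · by_cases hs : SinglyCovered π (fmin A)
    · exact ⟨A, hA, (unlinkBlock_of_singlyCovered hs).symm ▸ hmA⟩
    · obtain ⟨B, hB, hBA, hmB⟩ := exists_ne_mem_of_not_singlyCovered hA hmA (hm ▸ hs)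
      have hne := (hπ.eq_fmin_of_mem hA hB hBA.symm hmA hmB).2.1
      exact ⟨B, hB, mem_unlinkBlock_of_ne hmB (hm ▸ hne)⟩
  · exact ⟨A, hA, mem_unlinkBlock_of_ne hmA hm⟩

lemma IsLinkedPartitionOfSet.isPartitionOfSet_unlink (hπ : IsLinkedPartitionOfSet F π) :
    IsPartitionOfSet F (unlink π) := by
  simp only [IsPartitionOfSet, unlink_eq_image, Finset.forall_mem_image]
  refine ⟨fun A hA => hπ.unlinkBlock_nonempty hA,
    fun A hA => unlinkBlock_subset.trans (hπ.2.1 A hA), fun m hm => ?_,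
    fun A hA B hB hAB => Finset.eq_empty_of_forall_notMem fun y hy => ?_⟩
  · obtain ⟨A, hA, hmA⟩ := hπ.2.2.1 m hm
    obtain ⟨B, hB, hmB⟩ := hπ.exists_mem_unlinkBlock hA hmA
    exact ⟨_, Finset.mem_image_of_mem _ hB, hmB⟩
  · obtain ⟨hyA, hyB⟩ := Finset.mem_inter.mp hy
    have hne : A ≠ B := fun h => hAB (h ▸ rfl)
    rcases (hπ.eq_fmin_of_mem hA hB hne (unlinkBlock_subset hyA) (unlinkBlock_subset hyB)).1
      with h | h
    · exact ne_fmin_of_mem_unlinkBlock hA hB hne.symm hyA (unlinkBlock_subset hyB) h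
    · exact ne_fmin_of_mem_unlinkBlock hB hA hne hyB (unlinkBlock_subset hyA) h

lemma IsLinkedPartitionOfSet.refines_unlink_genPart (hπ : IsLinkedPartitionOfSet F π) :
    Refines (unlink π) (genPart π) :=
  (refines_image fun _ => unlinkBlock_subset).trans (refines_genPart hπ.1)

lemma IsLinkedPartitionOfSet.fmin_eq_of_mem_genPart (hπ : IsLinkedPartitionOfSet F π)
    (hW : W ∈ genPart π) (hA : A ∈ π) (hmA : fmin W ∈ A) : fmin A = fmin W :=
  le_antisymm (fmin_le hmA) <| fmin_le <|
    subset_of_mem_genPart hW (fmin_mem ((isPartitionOfSet_genPart π).1 W hW)) hA hmA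
      (fmin_mem (hπ.1 A hA))

lemma IsLinkedPartitionOfSet.eq_of_fmin_genPart_mem (hπ : IsLinkedPartitionOfSet F π)
    (hW : W ∈ genPart π) (hA : A ∈ π) (hB : B ∈ π) (hmA : fmin W ∈ A) (hmB : fmin W ∈ B) :
    A = B := by
  by_contra hne
  exact (hπ.eq_fmin_of_mem hA hB hne hmA hmB).2.1
    ((hπ.fmin_eq_of_mem_genPart hW hA hmA).trans (hπ.fmin_eq_of_mem_genPart hW hB hmB).symm)

lemma IsLinkedPartitionOfSet.exists_mem_gt_fmin_le (hπ : IsLinkedPartitionOfSet F π)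
    (hnc : ¬ IsCrossing π) (hW : W ∈ genPart π) (hA : A ∈ π) (hmA : fmin W ∈ A) {x : ℕ}
    (hxW : x ∈ W) (hmx : fmin W < x) : ∃ y ∈ A, fmin W < y ∧ y ≤ x := by
  set m := fmin W
  by_contra! hno
  let S : Set ℕ := {z | z ∈ W ∧ m < z ∧ ∀ y ∈ A, m < y → z < y}
  have hS : ∀ B ∈ π, ∀ z ∈ B, ∀ y ∈ B, z ∈ S → y ∈ S := by
    rintro B hB z hz y hy ⟨hzW, hmz, hzA⟩
    have hyW := subset_of_mem_genPart hW hzW hB hz hy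
    have hBA : B ≠ A := by
      rintro rfl
      exact lt_irrefl z (hzA z hz hmz)
    have hmy : m ≠ y := fun h =>
      hBA (hπ.eq_of_fmin_genPart_mem hW hB hA (show m ∈ B from h ▸ hy) hmA)
    refine ⟨hyW, lt_of_le_of_ne (fmin_le hyW) hmy, fun q hq hmq => ?_⟩
    rcases lt_trichotomy y q with hyq | rfl | hqy
    · exact hyq
    · rcases (hπ.eq_fmin_of_mem hA hB hBA.symm hq hy).1 with h | h
      · exact absurd (h.trans (hπ.fmin_eq_of_mem_genPart hW hA hmA)).symm hmy
      · have := fmin_le hz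
        have := hzA y hq hmq
        omega
    · exact absurd ⟨A, hA, B, hB, hBA.symm, m, hmA, z, hz, q, hq, y, hy, hmz, hzA q hq hmq, hqy⟩
        hnc
  have hxm := (mem_genPart_iff hW hxW).mp (fmin_mem ((isPartitionOfSet_genPart π).1 W hW))
  exact lt_irrefl m ((mem_iff_of_eqvGen_linked hS hxm).mp ⟨hxW, hmx, hno⟩).2.1

lemma IsLinkedPartitionOfSet.exists_mem_cycUnlink_fmin_fmax (hπ : IsLinkedPartitionOfSet F π)
    (hnc : ¬ IsCrossing π) (hW : W ∈ genPart π) :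
    ∃ V ∈ cycUnlink π, fmin W ∈ V ∧ fmax W ∈ V := by
  have hβ : IsPartitionOfSet F (genPart π) := hπ.sup_id_eq ▸ isPartitionOfSet_genPart π
  have hmW := fmin_mem (hβ.1 W hW)
  obtain ⟨A, hA, hmA⟩ := hπ.2.2.1 _ (hβ.2.1 W hW hmW)
  have hs : SinglyCovered π (fmin A) := by
    rw [hπ.fmin_eq_of_mem_genPart hW hA hmA]
    exact singlyCovered_of_forall_eq hA hmA
      fun B hB hmB => hπ.eq_of_fmin_genPart_mem hW hB hA hmB hmA
  have hAu : A ∈ unlink π := Finset.mem_image.mpr ⟨A, hA, unlinkBlock_of_singlyCovered hs⟩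
  have hnext : nextInBlock W (fmin W) ∈ A := by
    rcases (le_fmax hmW).eq_or_lt with h | h
    · rw [h, nextInBlock_fmax]
      exact h ▸ hmA
    · obtain ⟨hn, hmn, -⟩ := nextInBlock_spec (fmax_mem ⟨_, hmW⟩) h
      obtain ⟨y, hyA, hmy, hyn⟩ := hπ.exists_mem_gt_fmin_le hnc hW hA hmA hn hmn
      have hny := (nextInBlock_spec (subset_of_mem_genPart hW hmW hA hmA hyA) hmy).2.2
      exact le_antisymm hny hyn ▸ hyA
  refine ⟨A.image (permOfInv (genPart π)), Finset.mem_image_of_mem _ hAu,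
    hβ.mem_image_permOfInv hW hmW hnext, hβ.mem_image_permOfInv hW (fmax_mem ⟨_, hmW⟩) ?_⟩
  rwa [nextInBlock_fmax]

end Unlinking

/-- Let `π ∈ NCL(n)`. Then the cycled unlinking `π°` is in `NC(n)`,
and `π° ≪ π̂`. -/
theorem stmt2 (n : ℕ) (π : Finset (Finset ℕ)) (hπ : IsNCL n π) :
    IsNCPartition n (cycUnlink π) ∧ LL (cycUnlink π) (genPart π) := by
  obtain ⟨hlink, hnc⟩ := hπ
  have hβ : IsPartitionOfSet (Finset.Icc 1 n) (genPart π) :=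
    hlink.sup_id_eq ▸ isPartitionOfSet_genPart π
  have hunlink := hlink.refines_unlink_genPart
  exact ⟨⟨hlink.isPartitionOfSet_unlink.mapPart_of_bijOn hβ.bijOn_permOfInv,
      hβ.not_isCrossing_mapPart_permOfInv (not_isCrossing_genPart hnc)
        (not_isCrossing_image (fun _ => unlinkBlock_subset) hnc) hunlink⟩,
    hβ.refines_mapPart_permOfInv hunlink,
    fun W hW => hlink.exists_mem_cycUnlink_fmin_fmax hnc hW⟩
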